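/- arXiv:1508.00385 — 3 statements merged into one kernel-verified Lean document; each statement's English description precedes it below -/
import Mathlib

section
/- Let n ≥ 4 and let γ_1 ≥ γ_2 ≥ ... ≥ γ_{n-1} ≥ 0 be reals summing to n, with γ_1 ≥ α, γ_2 ≥ β, α ≥ β, and α + β(n−2) > n. Then ∑_{i=1}^{n-1} e^{γ_i − 1} + e^{-1} ≥ e^{-1} + e^{α−1} + e^{β−1} + (n−3)·e^{(3−α−β)/(n−3)}. -/
/-!
A tangent-line argument for the convex function `exp`. Let `c = (n - α - β)/(n - 3)`, so that
`(α, β, c, …, c)` has the same sum `n` as `γ`, and `c ≤ β ≤ α` by the hypothesis on `α, β`. The gap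
between `x ↦ exp (x - 1)` and its tangent at `c` is nonnegative and increasing on `[c, ∞)`. Summing
the tangent bound over all coordinates uses only `∑ γ i = n`; keeping the gaps at `γ₁, γ₂` and
lowering them to the gaps at `α, β` gives the bound, the linear terms adding up to
`(n - 3) * exp (c - 1)`.
-/

open Real BigOperators

noncomputable def expTangentGap (c x : ℝ) : ℝ := exp x - exp c * (x - c + 1)

lemma exp_mul_sub_add_one_le_exp (c x : ℝ) : exp c * (x - c + 1) ≤ exp x := by
  calc exp c * (x - c + 1) ≤ exp c * exp (x - c) := by
        gcongr; linarith [add_one_le_exp (x - c)]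
    _ = exp x := by rw [← exp_add]; ring_nf

lemma expTangentGap_nonneg (c x : ℝ) : 0 ≤ expTangentGap c x :=
  sub_nonneg.2 (exp_mul_sub_add_one_le_exp c x)

lemma expTangentGap_le_expTangentGap {c y x : ℝ} (hcy : c ≤ y) (hyx : y ≤ x) :
    expTangentGap c y ≤ expTangentGap c x := by
  have htangent := exp_mul_sub_add_one_le_exp y x
  have hslope : exp c ≤ exp y := exp_le_exp.2 hcy
  unfold expTangentGap
  nlinarith

lemma add_le_sum_of_ne {ι : Type*} [Fintype ι] {f : ι → ℝ} (hf : ∀ k, 0 ≤ f k) {i j : ι}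
    (hij : i ≠ j) : f i + f j ≤ ∑ k, f k := by
  classical
  rw [← Finset.sum_pair hij]
  exact Finset.sum_le_sum_of_subset_of_nonneg (Finset.subset_univ _) fun k _ _ => hf k

/-- `hc` says that `(a, b, c, …, c)` has the same sum as `x`. -/
theorem add_add_mul_exp_le_sum_exp {ι : Type*} [Fintype ι] (x : ι → ℝ) {i j : ι} (hij : i ≠ j)
    {a b c : ℝ} (ha : a ≤ x i) (hb : b ≤ x j) (hca : c ≤ a) (hcb : c ≤ b)
    (hc : ((Fintype.card ι : ℝ) - 2) * c = ∑ k, x k - a - b) :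
    exp a + exp b + ((Fintype.card ι : ℝ) - 2) * exp c ≤ ∑ k, exp (x k) := by
  have hgaps : expTangentGap c a + expTangentGap c b ≤ ∑ k, expTangentGap c (x k) :=
    (add_le_add (expTangentGap_le_expTangentGap hca ha) (expTangentGap_le_expTangentGap hcb hb)).trans
      (add_le_sum_of_ne (fun k => expTangentGap_nonneg c (x k)) hij)
  have hsplit : ∑ k, exp (x k) =
      ∑ k, expTangentGap c (x k) + exp c * (∑ k, x k - Fintype.card ι * (c - 1)) := by
    simp only [expTangentGap, Finset.sum_sub_distrib, ← Finset.mul_sum, Finset.sum_add_distrib,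
      Finset.sum_const, Finset.card_univ, nsmul_eq_mul]
    ring
  rw [hsplit]
  simp only [expTangentGap] at hgaps ⊢
  linear_combination hgaps + exp c * hc

theorem stmt_8 {n : ℕ} (hn : 4 ≤ n) (γ : Fin (n - 1) → ℝ)
    (hsum : ∑ i, γ i = n) (α β : ℝ)
    (h1 : α ≤ γ ⟨0, by omega⟩) (h2 : β ≤ γ ⟨1, by omega⟩) (hαβ : β ≤ α)
    (hcond : (n : ℝ) < α + β * ((n : ℝ) - 2)) :
    (∑ i, Real.exp (γ i - 1)) + Real.exp (-1) ≥
      Real.exp (-1) + Real.exp (α - 1) + Real.exp (β - 1) +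
        ((n : ℝ) - 3) * Real.exp ((3 - α - β) / ((n : ℝ) - 3)) := by
  have hn3 : (0 : ℝ) < n - 3 := by
    have : (4 : ℝ) ≤ n := by exact_mod_cast hn
    linarith
  have hcard : ((Fintype.card (Fin (n - 1)) : ℕ) : ℝ) - 2 = n - 3 := by
    rw [Fintype.card_fin, Nat.cast_sub (by omega)]
    ring
  have hcβ : (3 - α - β) / ((n : ℝ) - 3) ≤ β - 1 := by
    rw [div_le_iff₀ hn3]
    nlinarith
  have key := add_add_mul_exp_le_sum_exp (fun i => γ i - 1) (i := ⟨0, by omega⟩)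
    (j := ⟨1, by omega⟩) (by simp) (a := α - 1) (b := β - 1) (by linarith) (by linarith)
    (by linarith) hcβ (by
      rw [hcard, Finset.sum_sub_distrib, hsum, mul_div_cancel₀ _ hn3.ne']
      simp only [Finset.sum_const, Finset.card_univ, Fintype.card_fin, nsmul_eq_mul, mul_one]
      rw [Nat.cast_sub (by omega)]
      ring)
  rw [hcard] at key
  linarith
end

section
/- Let G be a simple connected graph on n vertices with b = n + 2∑_{(i,j)∈E} 1/(d_i d_j) and h* = ⌊n²/b⌋ ≥ 1. Then Q := (n + √((b(h*+1) − n²)/h*))/(1 + h*) satisfies Q ≥ n/(n−1). -/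
/-!
Every vertex contributes at least `1 / (n - 1)` to `2 R_{-1}(G)`: it has `d_i` terms, each at
least `1 / (d_i (n - 1))`. Hence `b ≥ n² / (n - 1)` and `h* ≤ n - 1`. If `h* ≤ n - 2` then
`1 + h* ≤ n - 1` and the square root is not even needed; if `h* = n - 1` the square root alone
is at least `n / (n - 1)`.
-/

open Matrix Real BigOperators

/-- Normalized Laplacian `L(G) = I - D^{-1/2} A D^{-1/2}`. -/
noncomputable def normLap {n : ℕ} (G : SimpleGraph (Fin n)) [DecidableRel G.Adj] :
    Matrix (Fin n) (Fin n) ℝ :=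
  1 - (Matrix.diagonal fun i => ((G.degree i : ℝ)) ^ (-(1:ℝ)/2)) * G.adjMatrix ℝ *
      (Matrix.diagonal fun i => ((G.degree i : ℝ)) ^ (-(1:ℝ)/2))

/-- Randić index `R_{-1}(G) = ∑_{(i,j)∈E} 1/(d_i d_j)` (each unordered edge counted once). -/
noncomputable def randic {n : ℕ} (G : SimpleGraph (Fin n)) [DecidableRel G.Adj] : ℝ :=
  (1/2) * ∑ i, ∑ j ∈ G.neighborFinset i, (1 : ℝ) / (G.degree i * G.degree j)

namespace SimpleGraph

variable {V : Type*} [Fintype V] (G : SimpleGraph V) [DecidableRel G.Adj]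

lemma degree_le_card_sub_one (v : V) : (G.degree v : ℝ) ≤ Fintype.card V - 1 := by
  have := G.degree_lt_card_verts v
  rw [le_sub_iff_add_le]
  exact_mod_cast this

lemma inv_card_sub_one_le_sum_neighbor {i : V} (hi : 0 < G.degree i) :
    1 / (Fintype.card V - 1 : ℝ) ≤
      ∑ j ∈ G.neighborFinset i, (1 : ℝ) / (G.degree i * G.degree j) := by
  have hdi : (0 : ℝ) < G.degree i := by exact_mod_cast hi
  calc 1 / (Fintype.card V - 1 : ℝ)
      = ∑ _j ∈ G.neighborFinset i, (1 : ℝ) / (G.degree i * (Fintype.card V - 1)) := by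
        rw [Finset.sum_const, card_neighborFinset_eq_degree, nsmul_eq_mul]
        field_simp
    _ ≤ ∑ j ∈ G.neighborFinset i, (1 : ℝ) / (G.degree i * G.degree j) := by
        refine Finset.sum_le_sum fun j hj => one_div_le_one_div_of_le ?_ ?_
        · have : (0 : ℝ) < G.degree j := by
            exact_mod_cast ((G.mem_neighborFinset i j).mp hj).degree_pos_right
          positivity
        · exact mul_le_mul_of_nonneg_left (G.degree_le_card_sub_one j) hdi.le

end SimpleGraph

lemma div_sub_one_le_two_mul_randic {n : ℕ} (G : SimpleGraph (Fin n)) [DecidableRel G.Adj]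
    (hdeg : ∀ v, 0 < G.degree v) : (n : ℝ) / (n - 1) ≤ 2 * randic G := by
  have := Finset.sum_le_sum fun i (_ : i ∈ Finset.univ) =>
    G.inv_card_sub_one_le_sum_neighbor (hdeg i)
  simp only [Finset.sum_const, Finset.card_univ, Fintype.card_fin, nsmul_eq_mul] at this
  rw [randic, div_eq_mul_one_div]
  linarith

lemma sq_div_le_sub_one_of_div_sub_one_le {n b : ℝ} (hn : 1 < n) (hb : n / (n - 1) ≤ b - n) :
    n ^ 2 / b ≤ n - 1 := by
  have hn' : 0 < n - 1 := sub_pos.mpr hn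
  rw [div_le_iff₀ hn'] at hb
  rw [div_le_iff₀ (by nlinarith)]
  nlinarith

/-- The case `h* = n - 1` of the theorem, written with `n = h + 1`. -/
lemma div_le_sqrt_of_div_le_sub {h b : ℝ} (hh : 0 < h) (hb : (h + 1) / h ≤ b - (h + 1)) :
    (h + 1) / h ≤ √((b * (h + 1) - (h + 1) ^ 2) / h) := by
  apply Real.le_sqrt_of_sq_le
  calc ((h + 1) / h) ^ 2 = (h + 1) * ((h + 1) / h) / h := by ring
    _ ≤ (h + 1) * (b - (h + 1)) / h := by gcongr
    _ = (b * (h + 1) - (h + 1) ^ 2) / h := by ring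

theorem stmt_15_general {n : ℕ} (hn : 2 ≤ n) (G : SimpleGraph (Fin n)) [DecidableRel G.Adj]
    (hG : G.Connected) (b : ℝ) (hb : b = n + 2 * randic G)
    (hstar : ℕ) (hh : hstar = ⌊(n : ℝ) ^ 2 / b⌋₊) :
    ((n : ℝ) + Real.sqrt ((b * (hstar + 1) - (n : ℝ) ^ 2) / hstar)) / (1 + hstar) ≥
      (n : ℝ) / ((n : ℝ) - 1) := by
  have : Nontrivial (Fin n) := Fin.nontrivial_iff_two_le.mpr hn
  have hrandic := div_sub_one_le_two_mul_randic G fun v => hG.preconnected.degree_pos_of_nontrivial v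
  have hn1 : (1 : ℝ) < n := by exact_mod_cast hn
  have hbn : n / (n - 1) ≤ b - n := by linarith
  have hstar_lt : hstar < n := hh ▸ (Nat.floor_lt' (by omega)).mpr
    (by linarith [sq_div_le_sub_one_of_div_sub_one_le hn1 hbn])
  rw [ge_iff_le]
  rcases (by omega : hstar + 2 ≤ n ∨ hstar + 1 = n) with hlt | rfl
  · have : (hstar : ℝ) + 2 ≤ n := by exact_mod_cast hlt
    calc (n : ℝ) / (n - 1) ≤ n / (1 + hstar) := by gcongr; linarith
      _ ≤ _ := by gcongr; exact le_add_of_nonneg_right (Real.sqrt_nonneg _)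
  · push_cast at hbn ⊢
    have hpos : (0 : ℝ) < hstar := by exact_mod_cast (by omega : 0 < hstar)
    have := div_le_sqrt_of_div_le_sub hpos (by simpa using hbn)
    rw [add_sub_cancel_right, le_div_iff₀ (by positivity)]
    calc (hstar + 1 : ℝ) / hstar * (1 + hstar) = hstar + 1 + (hstar + 1) / hstar := by
          field_simp; ring
      _ ≤ _ := by linarith

theorem stmt_15 {n : ℕ} (hn : 2 ≤ n) (G : SimpleGraph (Fin n)) [DecidableRel G.Adj]
    (hG : G.Connected) (b : ℝ) (hb : b = n + 2 * randic G)
    (hstar : ℕ) (hh : hstar = ⌊(n : ℝ) ^ 2 / b⌋₊) (hh1 : 1 ≤ hstar) :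
    ((n : ℝ) + Real.sqrt ((b * (hstar + 1) - (n : ℝ) ^ 2) / hstar)) / (1 + hstar) ≥
      (n : ℝ) / ((n : ℝ) - 1) :=
  stmt_15_general hn G hG b hb hstar hh
end

section
/- Let G be a simple connected graph on n ≥ 2 vertices with normalized Laplacian eigenvalues γ_1 ≥ ... ≥ γ_n = 0 and Randić index R_{-1}(G). Then NEE(G) = ∑_{i=1}^n e^{γ_i−1} ≥ √((n−1)(1 + (n−2)e^{2/(n−1)}) + 4R_{-1}(G)). -/
/-!
Write `L = D^{-1/2} (D - A) D^{-1/2}`: it is positive semidefinite and singular, so its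
eigenvalues are `γ_i ≥ 0` with some `γ_{i₀} = 0`, while `tr L = n` and `tr L² = n + 2 R_{-1}`.
With `u_i = e^{γ_i - 1}` for `i ≠ i₀` we get `NEE = e^{-1} + ∑ u_i` and
`NEE² ≥ ∑ (u_i² + 2 e^{-1} u_i) + ∑_{i ≠ j} u_i u_j`.
Since `∑_{i ≠ i₀} (γ_i - 1) = 1`, Jensen bounds the off-diagonal sum by
`(n-1)(n-2) e^{2/(n-1)}`, and the elementary bound `γ (2γ - 1) ≤ e^{2(γ-1)} + 2 e^{γ-2}`
bounds the diagonal sum by `∑ γ_i (2γ_i - 1) = 2 tr L² - tr L = n + 4 R_{-1}`.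
-/

open Matrix Real BigOperators

open Finset

theorem ConvexOn.card_mul_map_sum_div_card_le {ι : Type*} {g : ℝ → ℝ}
    (hg : ConvexOn ℝ Set.univ g) (t : Finset ι) (f : ι → ℝ) :
    #t * g ((∑ i ∈ t, f i) / #t) ≤ ∑ i ∈ t, g (f i) := by
  rcases t.eq_empty_or_nonempty with rfl | ht
  · simp
  have hc : (0 : ℝ) < #t := by exact_mod_cast ht.card_pos
  have h := hg.map_sum_le (t := t) (w := fun _ => (#t : ℝ)⁻¹) (p := f)
    (fun _ _ => by positivity) (by simp [hc.ne']) (fun _ _ => Set.mem_univ _)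
  simp only [smul_eq_mul, ← mul_sum] at h
  rw [mul_comm, ← le_div_iff₀ hc]
  simpa only [inv_mul_eq_div] using h

namespace Finset

variable {ι : Type*} [DecidableEq ι]

theorem sum_product_self_eq_sum_add_sum_offDiag {M : Type*} [AddCommMonoid M] (s : Finset ι)
    (g : ι × ι → M) :
    ∑ p ∈ s ×ˢ s, g p = ∑ i ∈ s, g (i, i) + ∑ p ∈ s.offDiag, g p := by
  rw [← diag_union_offDiag, sum_union (disjoint_diag_offDiag s), sum_diag]

theorem sq_sum_eq_sum_sq_add_sum_offDiag {R : Type*} [CommSemiring R] (s : Finset ι)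
    (f : ι → R) :
    (∑ i ∈ s, f i) ^ 2 = ∑ i ∈ s, f i ^ 2 + ∑ p ∈ s.offDiag, f p.1 * f p.2 := by
  rw [sq, sum_mul_sum, ← sum_product', sum_product_self_eq_sum_add_sum_offDiag]
  simp only [sq]

theorem sum_offDiag_add (s : Finset ι) (b : ι → ℝ) :
    ∑ p ∈ s.offDiag, (b p.1 + b p.2) = 2 * (#s - 1) * ∑ i ∈ s, b i := by
  have h := s.sum_product_self_eq_sum_add_sum_offDiag fun p => b p.1 + b p.2
  rw [sum_product, sum_add_distrib] at h
  simp only [sum_add_distrib, sum_const, nsmul_eq_mul, ← mul_sum] at h ⊢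
  linarith

theorem card_mul_exp_le_sum_offDiag_exp (s : Finset ι) (b : ι → ℝ) :
    #s * (#s - 1) * Real.exp (2 * (∑ i ∈ s, b i) / #s) ≤
      ∑ p ∈ s.offDiag, Real.exp (b p.1) * Real.exp (b p.2) := by
  have hcard : (#s.offDiag : ℝ) = #s * (#s - 1) := by
    rw [offDiag_card, Nat.cast_sub (Nat.le_mul_self _)]
    push_cast; ring
  simp only [← Real.exp_add]
  have h := convexOn_exp.card_mul_map_sum_div_card_le s.offDiag fun p => b p.1 + b p.2
  rw [sum_offDiag_add, hcard] at h
  -- for `#s = 1` the mean computed by `h` is a junk division by zero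
  rcases eq_or_ne (#s : ℝ) 1 with h1 | h1
  · rw [h1]; simp only [sub_self, mul_zero, zero_mul]; positivity
  convert h using 3
  field_simp [sub_ne_zero.mpr h1]

end Finset

theorem mul_two_mul_sub_one_le_exp_sub_one_sq_add {x : ℝ} (hx : 0 ≤ x) :
    x * (2 * x - 1) ≤ exp (x - 1) ^ 2 + 2 * exp (-1) * exp (x - 1) := by
  have hcross : 0 ≤ 2 * exp (-1) * exp (x - 1) := by positivity
  rcases le_total x 1 with hx1 | hx1
  · have h := add_one_le_exp (x - 1)
    nlinarith
  · have hsq : 1 + 2 * (x - 1) + (2 * (x - 1)) ^ 2 / 2 ≤ exp (x - 1) ^ 2 := by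
      rw [← exp_nat_mul]; push_cast
      exact quadratic_le_exp_of_nonneg (by linarith)
    have hlin : x - 1 ≤ exp (-1) * exp (x - 1) := by
      rw [← exp_add]; linarith [add_one_le_exp (-1 + (x - 1))]
    nlinarith

theorem Finset.sum_mul_two_mul_sub_one_add_card_mul_exp_le_sq {ι : Type*} [DecidableEq ι]
    (s : Finset ι) {γ : ι → ℝ} (hγ : ∀ i ∈ s, 0 ≤ γ i) :
    ∑ i ∈ s, γ i * (2 * γ i - 1) + #s * (#s - 1) * exp (2 * (∑ i ∈ s, (γ i - 1)) / #s) ≤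
      (∑ i ∈ s, exp (γ i - 1) + exp (-1)) ^ 2 := by
  have hdiag : ∑ i ∈ s, γ i * (2 * γ i - 1) ≤
      ∑ i ∈ s, exp (γ i - 1) ^ 2 + 2 * exp (-1) * ∑ i ∈ s, exp (γ i - 1) := by
    rw [mul_sum, ← sum_add_distrib]
    exact sum_le_sum fun i hi => mul_two_mul_sub_one_le_exp_sub_one_sq_add (hγ i hi)
  have hoff := s.card_mul_exp_le_sum_offDiag_exp fun i => γ i - 1
  have hsq := s.sq_sum_eq_sum_sq_add_sum_offDiag fun i => exp (γ i - 1)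
  nlinarith [sq_nonneg (exp (-1))]

theorem sqrt_le_sum_exp_sub_one_of_sum_eq_card {ι : Type*} [Fintype ι] [DecidableEq ι]
    {γ : ι → ℝ} {i₀ : ι} (h₀ : γ i₀ = 0) (hγ : ∀ i, 0 ≤ γ i)
    (hsum : ∑ i, γ i = Fintype.card ι) {R : ℝ} (hsq : ∑ i, γ i ^ 2 = Fintype.card ι + 2 * R) :
    √((Fintype.card ι - 1) * (1 + (Fintype.card ι - 2) * exp (2 / (Fintype.card ι - 1))) +
      4 * R) ≤ ∑ i, exp (γ i - 1) := by
  set s := univ.erase i₀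
  have hcard : (#s : ℝ) = Fintype.card ι - 1 := by
    rw [card_erase_of_mem (mem_univ _), card_univ,
      Nat.cast_pred (Fintype.card_pos_iff.mpr ⟨i₀⟩)]
  have hsum_s : ∑ i ∈ s, (γ i - 1) = 1 := by
    rw [sum_sub_distrib, sum_erase _ (by rw [h₀]), hsum, sum_const, nsmul_one, hcard]
    ring
  have hquad_s : ∑ i ∈ s, γ i * (2 * γ i - 1) = Fintype.card ι + 4 * R := by
    rw [sum_erase _ (by simp [h₀])]
    simp only [mul_sub, mul_one, sum_sub_distrib]
    have : ∑ i, γ i * (2 * γ i) = 2 * ∑ i, γ i ^ 2 := by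
      rw [mul_sum]; exact sum_congr rfl fun i _ => by ring
    rw [this, hsq, hsum]; ring
  have key := s.sum_mul_two_mul_sub_one_add_card_mul_exp_le_sq fun i _ => hγ i
  rw [hsum_s, hquad_s, hcard] at key
  rw [← sum_erase_add _ _ (mem_univ i₀), h₀, zero_sub]
  refine sqrt_le_iff.mpr ⟨by positivity, le_trans ?_ key⟩
  ring_nf
  linarith

theorem Real.rpow_neg_one_half_mul_self {d : ℝ} (hd : 0 ≤ d) :
    d ^ (-(1 : ℝ) / 2) * d ^ (-(1 : ℝ) / 2) = d⁻¹ := by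
  rw [← rpow_add' hd (by norm_num)]; norm_num [rpow_neg_one]

namespace Matrix.IsHermitian

variable {𝕜 ι : Type*} [RCLike 𝕜] [Fintype ι] [DecidableEq ι] {A : Matrix ι ι 𝕜}

theorem trace_mul_self_eq_sum_sq_eigenvalues (hA : A.IsHermitian) :
    (A * A).trace = ∑ i, ((hA.eigenvalues i ^ 2 : ℝ) : 𝕜) := by
  conv_lhs => rw [hA.spectral_theorem, ← map_mul, Unitary.conjStarAlgAut_apply, trace_mul_cycle,
    Unitary.coe_star_mul_self, one_mul, diagonal_mul_diagonal, trace_diagonal]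
  simp [sq]

theorem exists_eigenvalues_eq_zero (hA : A.IsHermitian) (hdet : A.det = 0) :
    ∃ i, hA.eigenvalues i = 0 := by
  rw [hA.det_eq_prod_eigenvalues, prod_eq_zero_iff] at hdet
  obtain ⟨i, -, hi⟩ := hdet
  exact ⟨i, by exact_mod_cast hi⟩

end Matrix.IsHermitian

namespace SimpleGraph

variable {n : ℕ} (G : SimpleGraph (Fin n)) [DecidableRel G.Adj]

noncomputable def invSqrtDegMatrix : Matrix (Fin n) (Fin n) ℝ :=
  diagonal fun i => (G.degree i : ℝ) ^ (-(1 : ℝ) / 2)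

theorem normLap_eq_invSqrtDegMatrix_mul_lapMatrix_mul (hdeg : ∀ i, 0 < G.degree i) :
    normLap G = G.invSqrtDegMatrix * G.lapMatrix ℝ * G.invSqrtDegMatrix := by
  have hdiag : G.invSqrtDegMatrix * G.degMatrix ℝ * G.invSqrtDegMatrix = 1 := by
    simp only [invSqrtDegMatrix, degMatrix, diagonal_mul_diagonal, ← diagonal_one]
    congr 1; funext i
    have hd : (G.degree i : ℝ) ≠ 0 := by exact_mod_cast (hdeg i).ne'
    rw [mul_right_comm, rpow_neg_one_half_mul_self (Nat.cast_nonneg _), inv_mul_cancel₀ hd]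
  rw [lapMatrix, mul_sub, sub_mul, hdiag]
  rfl

theorem normLap_posSemidef (hdeg : ∀ i, 0 < G.degree i) : (normLap G).PosSemidef := by
  have hself : G.invSqrtDegMatrixᴴ = G.invSqrtDegMatrix := by
    simp [invSqrtDegMatrix]
  have h := (posSemidef_lapMatrix ℝ G).mul_mul_conjTranspose_same G.invSqrtDegMatrix
  rwa [hself, ← normLap_eq_invSqrtDegMatrix_mul_lapMatrix_mul G hdeg] at h

theorem det_normLap [Nonempty (Fin n)] (hdeg : ∀ i, 0 < G.degree i) : (normLap G).det = 0 := by
  rw [normLap_eq_invSqrtDegMatrix_mul_lapMatrix_mul G hdeg, det_mul, det_mul,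
    det_lapMatrix_eq_zero]
  simp

theorem normLap_apply (i j : Fin n) :
    normLap G i j = (if i = j then 1 else 0) -
      if G.Adj i j then (G.degree i : ℝ) ^ (-(1 : ℝ) / 2) * (G.degree j : ℝ) ^ (-(1 : ℝ) / 2)
      else 0 := by
  rw [normLap, Matrix.sub_apply, one_apply, mul_diagonal, diagonal_mul, adjMatrix_apply]
  split_ifs <;> ring

theorem trace_normLap : (normLap G).trace = n := by
  simp [trace, normLap_apply]

theorem normLap_apply_mul_apply (i j : Fin n) :
    normLap G i j * normLap G j i =
      (if i = j then 1 else 0) + if G.Adj i j then 1 / (G.degree i * G.degree j : ℝ) else 0 := by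
  rw [normLap_apply, normLap_apply]
  by_cases hij : i = j
  · subst hij; simp
  · by_cases hadj : G.Adj i j
    · simp only [hij, Ne.symm hij, hadj, hadj.symm, if_true, if_false]
      rw [one_div, mul_inv, ← rpow_neg_one_half_mul_self (Nat.cast_nonneg (G.degree i)),
        ← rpow_neg_one_half_mul_self (Nat.cast_nonneg (G.degree j))]
      ring
    · simp [hij, Ne.symm hij, hadj]

theorem trace_normLap_mul_self : (normLap G * normLap G).trace = n + 2 * randic G := by
  simp only [trace, Matrix.diag, mul_apply, normLap_apply_mul_apply, sum_add_distrib, randic,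
    neighborFinset_eq_filter, sum_filter]
  simp

end SimpleGraph

theorem stmt_18 {n : ℕ} (hn : 2 ≤ n) (G : SimpleGraph (Fin n)) [DecidableRel G.Adj]
    (hG : G.Connected) (hL : (normLap G).IsHermitian) :
    ∑ i, Real.exp (hL.eigenvalues i - 1) ≥
      Real.sqrt (((n : ℝ) - 1) * (1 + ((n : ℝ) - 2) * Real.exp (2 / ((n : ℝ) - 1))) +
        4 * randic G) := by
  have : Nontrivial (Fin n) := Fin.nontrivial_iff_two_le.mpr hn
  have hdeg : ∀ i, 0 < G.degree i := fun i => hG.preconnected.degree_pos_of_nontrivial i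
  obtain ⟨i₀, h₀⟩ := hL.exists_eigenvalues_eq_zero (G.det_normLap hdeg)
  have hsum : ∑ i, hL.eigenvalues i = Fintype.card (Fin n) := by
    simpa [G.trace_normLap] using hL.trace_eq_sum_eigenvalues.symm
  have hsq : ∑ i, hL.eigenvalues i ^ 2 = Fintype.card (Fin n) + 2 * randic G := by
    simpa [G.trace_normLap_mul_self] using hL.trace_mul_self_eq_sum_sq_eigenvalues.symm
  simpa using sqrt_le_sum_exp_sub_one_of_sum_eq_card h₀
    (G.normLap_posSemidef hdeg).eigenvalues_nonneg hsum hsq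
end
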